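/- arXiv:2310.06638 — 2 statements merged into one kernel-verified Lean document; each statement's English description precedes it below -/
import Mathlib

section
/- Let λ^{(1)}, …, λ^{(q)} be nonnegative rate vectors in ℝ^k, let s ∈ {1,…,q}, and let j ∈ {1,…,k} be such that Σ_{i=1}^{q} λ_j^{(i)} > 0. Then lim_{h→0⁺} [ p(λ^{(s)}; j, h) · ∏_{i≠s} p(λ^{(i)}; 0, h) ] / p(Σ_{i=1}^{q} λ^{(i)}; j, h) = λ_j^{(s)} / Σ_{i=1}^{q} λ_j^{(i)}. In words: a packet of jumps of size j registered in the merged process of q independent GCPs originates from the s-th component, in the small-interval limit, with probability λ_j^{(s)} / Σ_i λ_j^{(i)}. -/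
open Finset

/-- The set `Ω(k, n)` of tuples `x : Fin k → ℕ` with `∑_{j=1}^k j * x_j = n`
(`j : Fin k` represents the jump size `j + 1`). -/
def gcpOmega (k n : ℕ) : Finset (Fin k → ℕ) :=
  (Fintype.piFinset fun _ : Fin k => Finset.range (n + 1)).filter
    fun x => ∑ j : Fin k, (j.1 + 1) * x j = n

/-- The probability mass function of the generalized counting process with jump
rates `lam j` for jumps of size `j + 1`, evaluated at state `n` and time `t`. -/
noncomputable def gcpPMF (k : ℕ) (lam : Fin k → ℝ) (n : ℕ) (t : ℝ) : ℝ :=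
  ∑ x ∈ gcpOmega k n,
    ∏ j : Fin k, (lam j * t) ^ (x j) / (Nat.factorial (x j)) * Real.exp (-(lam j * t))

/-!
Each summand of `p(λ; n, t)` is `t ^ |x|` times a function continuous in `t`, where
`|x| = ∑ i, x i ≥ 1` as soon as `n ≠ 0`; for `n = j + 1` equality holds only at the single jump
`x = e_j`, whose coefficient is `λ_j`. Hence `p(λ; j + 1, t) = t · σ_λ(t)` with `σ_λ` continuous
and `σ_λ(0) = λ_j`, while `p(λ; 0, t) → 1`. After cancelling `t`, the ratio tends to
`λ_j^{(s)} · 1 / ∑ i, λ_j^{(i)}`.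
-/

open Filter Topology Nat

section
variable {k : ℕ}

theorem exists_eq_pi_single_of_sum_eq_one {x : Fin k → ℕ} (hx : ∑ i, x i = 1) :
    ∃ i, x = Pi.single i 1 := by
  have hsum : (Finsupp.equivFunOnFinite.symm x).sum (fun _ n => n) = 1 := by
    rw [Finsupp.sum_fintype _ _ fun _ => rfl]
    exact hx
  obtain ⟨i, hi⟩ := (Finsupp.sum_eq_one_iff _).1 hsum
  refine ⟨i, ?_⟩
  rw [← Finsupp.single_eq_pi_single, ← hi]
  rfl

theorem mem_gcpOmega {n : ℕ} {x : Fin k → ℕ} :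
    x ∈ gcpOmega k n ↔ ∑ j : Fin k, (j.1 + 1) * x j = n := by
  refine ⟨fun hx => (mem_filter.1 hx).2, fun hx => mem_filter.2 ⟨?_, hx⟩⟩
  refine Fintype.mem_piFinset.2 fun j => mem_range.2 (Nat.lt_succ_of_le ?_)
  calc x j ≤ (j.1 + 1) * x j := Nat.le_mul_of_pos_left _ j.1.succ_pos
    _ ≤ n := hx ▸ single_le_sum (f := fun i : Fin k => (i.1 + 1) * x i)
      (fun _ _ => Nat.zero_le _) (mem_univ j)

theorem gcpOmega_zero : gcpOmega k 0 = {0} := by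
  ext x
  simp [mem_gcpOmega, funext_iff]

theorem pi_single_mem_gcpOmega (j : Fin k) : Pi.single j 1 ∈ gcpOmega k (j.1 + 1) := by
  simp [mem_gcpOmega, Pi.single_apply]

theorem one_le_sum_of_mem_gcpOmega {n : ℕ} (hn : n ≠ 0) {x : Fin k → ℕ}
    (hx : x ∈ gcpOmega k n) : 1 ≤ ∑ i, x i := by
  refine Nat.one_le_iff_ne_zero.2 fun h0 => hn ?_
  obtain rfl : x = 0 := funext fun i => sum_eq_zero_iff.1 h0 i (mem_univ i)
  rw [mem_gcpOmega] at hx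
  simpa using hx.symm

theorem eq_pi_single_of_mem_gcpOmega {j : Fin k} {x : Fin k → ℕ}
    (hx : x ∈ gcpOmega k (j.1 + 1)) (h1 : ∑ i, x i = 1) : x = Pi.single j 1 := by
  obtain ⟨i, rfl⟩ := exists_eq_pi_single_of_sum_eq_one h1
  have : i.1 + 1 = j.1 + 1 := by simpa [mem_gcpOmega, Pi.single_apply] using hx
  rw [Fin.ext (Nat.succ_injective this)]

theorem prod_gcp_factor_eq_pow_mul (lam : Fin k → ℝ) (x : Fin k → ℕ) (t : ℝ) :
    ∏ i, (lam i * t) ^ x i / (x i)! * Real.exp (-(lam i * t)) =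
      t ^ (∑ i, x i) * ∏ i, lam i ^ x i / (x i)! * Real.exp (-(lam i * t)) := by
  rw [← prod_pow_eq_pow_sum, ← prod_mul_distrib]
  refine prod_congr rfl fun i _ => ?_
  ring

theorem continuous_gcpPMF (lam : Fin k → ℝ) (n : ℕ) : Continuous (gcpPMF k lam n) := by
  unfold gcpPMF
  fun_prop

theorem gcpPMF_zero_zero (lam : Fin k → ℝ) : gcpPMF k lam 0 0 = 1 := by
  simp [gcpPMF, gcpOmega_zero]

/-- `∑ i, x i - 1` truncates only at `x = 0`, which lies in `gcpOmega k n` only for `n = 0`. -/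
noncomputable def gcpSlope (lam : Fin k → ℝ) (n : ℕ) (t : ℝ) : ℝ :=
  ∑ x ∈ gcpOmega k n, t ^ (∑ i, x i - 1) * ∏ i, lam i ^ x i / (x i)! * Real.exp (-(lam i * t))

theorem gcpPMF_eq_mul_gcpSlope (lam : Fin k → ℝ) {n : ℕ} (hn : n ≠ 0) (t : ℝ) :
    gcpPMF k lam n t = t * gcpSlope lam n t := by
  rw [gcpPMF, gcpSlope, mul_sum]
  refine sum_congr rfl fun x hx => ?_
  rw [prod_gcp_factor_eq_pow_mul, ← mul_assoc, ← pow_succ' t, Nat.sub_add_cancel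
    (one_le_sum_of_mem_gcpOmega hn hx)]

theorem continuous_gcpSlope (lam : Fin k → ℝ) (n : ℕ) : Continuous (gcpSlope lam n) := by
  unfold gcpSlope
  fun_prop

theorem gcpSlope_zero (lam : Fin k → ℝ) (j : Fin k) : gcpSlope lam (j.1 + 1) 0 = lam j := by
  rw [gcpSlope, sum_eq_single_of_mem _ (pi_single_mem_gcpOmega j)]
  · simp [Pi.single_apply, apply_ite]
  · intro x hx hne
    have h1 := one_le_sum_of_mem_gcpOmega j.1.succ_ne_zero hx
    have : ∑ i, x i - 1 ≠ 0 := fun h => hne (eq_pi_single_of_mem_gcpOmega hx (by omega))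
    simp [zero_pow this]

end

open Filter Topology in
theorem jump_origin_probability_many_gcps_general (k : ℕ) (q : ℕ)
    (lam : Fin q → Fin k → ℝ) (s : Fin q) (j : Fin k)
    (hpos : 0 < ∑ i : Fin q, lam i j) :
    Tendsto
      (fun h => gcpPMF k (lam s) (j.1 + 1) h *
        (∏ i ∈ Finset.univ.erase s, gcpPMF k (lam i) 0 h) /
        gcpPMF k (fun j' => ∑ i : Fin q, lam i j') (j.1 + 1) h)
      (𝓝[>] (0 : ℝ)) (𝓝 (lam s j / ∑ i : Fin q, lam i j)) := by
  have hslope (μ : Fin k → ℝ) : Tendsto (gcpSlope μ (j.1 + 1)) (𝓝[>] 0) (𝓝 (μ j)) :=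
    gcpSlope_zero μ j ▸ (continuous_gcpSlope μ _).continuousWithinAt
  have hrest : Tendsto (fun h => ∏ i ∈ univ.erase s, gcpPMF k (lam i) 0 h) (𝓝[>] 0) (𝓝 1) := by
    simpa only [prod_const_one, gcpPMF_zero_zero] using tendsto_finsetProd _
      fun i _ => (continuous_gcpPMF (lam i) 0).continuousWithinAt (x := 0) (s := Set.Ioi 0)
  have hlim := ((hslope (lam s)).mul hrest).div (hslope fun j' => ∑ i, lam i j') hpos.ne'
  rw [mul_one] at hlim
  refine hlim.congr' ?_
  filter_upwards [self_mem_nhdsWithin] with h hh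
  simp only [Pi.div_apply, gcpPMF_eq_mul_gcpSlope _ (Nat.add_one_ne_zero j.1) h]
  rw [mul_assoc, mul_div_mul_left _ _ (ne_of_gt hh)]

open Filter Topology in
/-- A packet of jumps of size `j + 1` (for `j : Fin k`) registered in the merged
process of `q` independent GCPs originates from the `s`-th component, in the
small-interval limit, with probability `λ_j^{(s)} / ∑ i, λ_j^{(i)}`. -/
theorem jump_origin_probability_many_gcps (k : ℕ) (hk : 1 ≤ k) (q : ℕ) (hq : 1 ≤ q)
    (lam : Fin q → Fin k → ℝ) (hlam : ∀ i j', 0 ≤ lam i j') (s : Fin q) (j : Fin k)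
    (hpos : 0 < ∑ i : Fin q, lam i j) :
    Tendsto
      (fun h => gcpPMF k (lam s) (j.1 + 1) h *
        (∏ i ∈ Finset.univ.erase s, gcpPMF k (lam i) 0 h) /
        gcpPMF k (fun j' => ∑ i : Fin q, lam i j') (j.1 + 1) h)
      (𝓝[>] (0 : ℝ)) (𝓝 (lam s j / ∑ i : Fin q, lam i j)) :=
  jump_origin_probability_many_gcps_general k q lam s j hpos
end

section
/- For every a ∈ ℕ₀ and t ≥ 0, the marginal of the joint probability mass function q over the second coordinate is Poisson: Σ_{n=0}^{∞} q(a, n, t) = e^{−ν̄ t} (ν̄ t)^a / a!, where ν̄ = Σ_{j=1}^{K₁} ν_j. In words: the number of packets of jumps registered from a fixed merging component of a merged GCP by time t is Poisson distributed with parameter ν̄ t. -/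
open Finset

/-- The index set `Θ(a, n)` of pairs `(r, s)` with `∑_j r_j = a` and
`∑_j j·r_j + ∑_l l·s_l = n` (`j : Fin K1` represents jump size `j + 1`, and
`l : Fin K2` represents jump size `l + 1`). -/
def jointTheta (K1 K2 a n : ℕ) : Finset ((Fin K1 → ℕ) × (Fin K2 → ℕ)) :=
  ((Fintype.piFinset fun _ : Fin K1 => Finset.range (a + 1)) ×ˢ
      (Fintype.piFinset fun _ : Fin K2 => Finset.range (n + 1))).filter
    fun p => (∑ j : Fin K1, p.1 j = a) ∧
      (∑ j : Fin K1, (j.1 + 1) * p.1 j) + (∑ l : Fin K2, (l.1 + 1) * p.2 l) = n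

/-- The joint probability mass function of the number of packets of jumps from a
tracked merging component (with rates `nu`) and the state of the merged GCP
(the other components contributing aggregated rates `rho`). -/
noncomputable def jointPMF (K1 K2 : ℕ) (nu : Fin K1 → ℝ) (rho : Fin K2 → ℝ)
    (a n : ℕ) (t : ℝ) : ℝ :=
  ∑ p ∈ jointTheta K1 K2 a n,
    (∏ j : Fin K1, (nu j * t) ^ (p.1 j) / (Nat.factorial (p.1 j))) *
      (∏ l : Fin K2, (rho l * t) ^ (p.2 l) / (Nat.factorial (p.2 l))) *
      Real.exp (-((∑ j : Fin K1, nu j) + ∑ l : Fin K2, rho l) * t)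

/-! Summing `q(a, ·, t)` over `n` regroups, according to the total jump size `n`, the absolutely
summable family `(r, s) ↦ [Σ r = a] ∏ (ν_j t)^{r_j}/r_j! · ∏ (ρ_l t)^{s_l}/s_l! · e^{-Λt}` on
`ℕ^{K₁} × ℕ^{K₂}`. This family is a product: its `r`-part has finite support and sums to
`(ν̄ t)^a / a!` by the multinomial theorem, and its `s`-part is a product of exponential series
summing to `e^{ρ̄ t}`. Multiplying by `e^{-Λt} = e^{-(ν̄ + ρ̄) t}` leaves the Poisson mass. -/

theorem Fin.prod_consEquiv_apply {M κ : Type*} [CommMonoid M] {K : ℕ} (f : Fin (K + 1) → κ → M)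
    (p : κ × (Fin K → κ)) :
    ∏ i, f i (Fin.consEquiv (fun _ => κ) p i) = f 0 p.1 * ∏ i : Fin K, f i.succ (p.2 i) := by
  simp only [Fin.prod_univ_succ, Fin.consEquiv, Equiv.coe_fn_mk, Fin.cons_zero, Fin.cons_succ]

theorem summable_norm_prod_pi {R κ : Type*} [NormedCommRing R] {K : ℕ} {f : Fin K → κ → R}
    (hf : ∀ i, Summable fun n => ‖f i n‖) : Summable fun s : Fin K → κ => ‖∏ i, f i (s i)‖ := by
  induction K with
  | zero => exact summable_of_hasFiniteSupport (Set.toFinite _)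
  | succ K ih =>
    have hcons := (hf 0).mul_norm (ih (f := fun i => f i.succ) fun i => hf i.succ)
    refine (Fin.consEquiv fun _ => κ).summable_iff.mp (hcons.congr fun p => ?_)
    exact congrArg norm (Fin.prod_consEquiv_apply f p).symm

theorem hasSum_prod_pi {R κ : Type*} [NormedCommRing R] [CompleteSpace R] {K : ℕ}
    {f : Fin K → κ → R} {S : Fin K → R}
    (hf : ∀ i, Summable fun n => ‖f i n‖) (hS : ∀ i, HasSum (f i) (S i)) :
    HasSum (fun s : Fin K → κ => ∏ i, f i (s i)) (∏ i, S i) := by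
  induction K with
  | zero => simp
  | succ K ih =>
    have htail : HasSum (fun s : Fin K → κ => ∏ i, f i.succ (s i)) (∏ i : Fin K, S i.succ) :=
      ih (fun i => hf i.succ) fun i => hS i.succ
    have hnorm : Summable fun s : Fin K → κ => ‖∏ i, f i.succ (s i)‖ :=
      summable_norm_prod_pi fun i => hf i.succ
    have hprod := summable_mul_of_summable_norm (hf 0) hnorm
    have hcons := (hS 0).mul htail hprod
    rw [Fin.prod_univ_succ]
    exact (Fin.consEquiv fun _ => κ).hasSum_iff.mp
      (hcons.congr_fun fun p => Fin.prod_consEquiv_apply f p)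

theorem HasSum.sum_finset_fiberwise {α β γ : Type*} [AddCommGroup α] [UniformSpace α]
    [IsUniformAddGroup α] [CompleteSpace α] [T2Space α] {f : β → α} {A : α} (hf : HasSum f A)
    (g : β → γ) (T : γ → Finset β) (hT : ∀ c b, f b ≠ 0 → (b ∈ T c ↔ g b = c)) :
    HasSum (fun c => ∑ b ∈ T c, f b) A := by
  refine (hf.tsum_fiberwise g).congr_fun fun c => ?_
  rw [← Finset.tsum_subtype', _root_.tsum_subtype, _root_.tsum_subtype]
  congr 1
  ext b
  rcases eq_or_ne (f b) 0 with hb | hb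
  · simp only [Set.indicator_apply_eq_zero.mpr fun _ => hb]
  · by_cases hbc : b ∈ g ⁻¹' {c}
    · rw [Set.indicator_of_mem ((hT c b hb).mpr hbc), Set.indicator_of_mem hbc]
    · rw [Set.indicator_of_notMem (mt (hT c b hb).mp hbc), Set.indicator_of_notMem hbc]

theorem Finset.sum_pow_div_factorial_eq_sum_piAntidiag {ι 𝕜 : Type*} [DecidableEq ι] [Field 𝕜]
    [CharZero 𝕜] (s : Finset ι) (x : ι → 𝕜) (n : ℕ) :
    (∑ i ∈ s, x i) ^ n / (n.factorial : 𝕜) =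
      ∑ k ∈ s.piAntidiag n, ∏ i ∈ s, x i ^ k i / ((k i).factorial : 𝕜) := by
  rw [Finset.sum_pow_eq_sum_piAntidiag, sum_div]
  refine sum_congr rfl fun k hk => ?_
  have hfact : (n.factorial : 𝕜) = (∏ i ∈ s, ((k i).factorial : 𝕜)) * Nat.multinomial s k := by
    rw [← (mem_piAntidiag.mp hk).1, ← Nat.multinomial_spec]; push_cast; rfl
  have hprod : (∏ i ∈ s, ((k i).factorial : 𝕜)) ≠ 0 :=
    prod_ne_zero_iff.mpr fun i _ => Nat.cast_ne_zero.mpr (Nat.factorial_ne_zero _)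
  have hmult : (Nat.multinomial s k : 𝕜) ≠ 0 := Nat.cast_ne_zero.mpr (Nat.multinomial_pos _ _).ne'
  rw [prod_div_distrib, hfact]
  field_simp

theorem ite_sum_eq_eq_zero_of_notMem_piAntidiag {ι M : Type*} [Fintype ι] [DecidableEq ι] [Zero M]
    (F : (ι → ℕ) → M) {n : ℕ} {k : ι → ℕ} (hk : k ∉ univ.piAntidiag n) :
    (if ∑ i, k i = n then F k else 0) = 0 :=
  if_neg fun hsum => hk (mem_piAntidiag.mpr ⟨hsum, fun i _ => mem_univ i⟩)

theorem hasSum_ite_sum_eq {ι M : Type*} [Fintype ι] [DecidableEq ι] [AddCommMonoid M]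
    [TopologicalSpace M] (F : (ι → ℕ) → M) (n : ℕ) :
    HasSum (fun k : ι → ℕ => if ∑ i, k i = n then F k else 0) (∑ k ∈ univ.piAntidiag n, F k) := by
  have hsum := hasSum_sum_of_ne_finset_zero (L := SummationFilter.unconditional _)
    fun k => ite_sum_eq_eq_zero_of_notMem_piAntidiag F (n := n) (k := k)
  rwa [sum_congr rfl fun k hk => if_pos (mem_piAntidiag.mp hk).1] at hsum

theorem mem_jointTheta {K1 K2 a n : ℕ} {p : (Fin K1 → ℕ) × (Fin K2 → ℕ)} :
    p ∈ jointTheta K1 K2 a n ↔ (∑ j, p.1 j = a) ∧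
      (∑ j : Fin K1, (j.1 + 1) * p.1 j) + (∑ l : Fin K2, (l.1 + 1) * p.2 l) = n := by
  refine ⟨fun hp => (mem_filter.mp hp).2, fun ⟨ha, hn⟩ => mem_filter.mpr ⟨?_, ha, hn⟩⟩
  simp only [mem_product, Fintype.mem_piFinset, mem_range, Nat.lt_succ_iff]
  refine ⟨fun j => ha ▸ single_le_sum (fun i _ => Nat.zero_le (p.1 i)) (mem_univ j),
    fun l => ?_⟩
  calc p.2 l ≤ (l.1 + 1) * p.2 l := Nat.le_mul_of_pos_left _ l.1.succ_pos
    _ ≤ ∑ l : Fin K2, (l.1 + 1) * p.2 l :=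
      single_le_sum (f := fun i : Fin K2 => (i.1 + 1) * p.2 i) (fun i _ => Nat.zero_le _)
        (mem_univ l)
    _ ≤ n := hn ▸ Nat.le_add_left _ _

theorem Real.hasSum_prod_pow_div_factorial {K : ℕ} (x : Fin K → ℝ) :
    HasSum (fun s : Fin K → ℕ => ∏ i, x i ^ s i / ((s i).factorial : ℝ)) (Real.exp (∑ i, x i)) := by
  have hnorm (i : Fin K) : Summable fun n : ℕ => ‖x i ^ n / (n.factorial : ℝ)‖ :=
    NormedSpace.norm_expSeries_div_summable (x i)
  have hexp (i : Fin K) : HasSum (fun n : ℕ => x i ^ n / (n.factorial : ℝ)) (Real.exp (x i)) := by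
    rw [Real.exp_eq_exp_ℝ]
    exact NormedSpace.expSeries_div_hasSum_exp (x i)
  have hprod := hasSum_prod_pi hnorm hexp
  rwa [Real.exp_sum]

theorem jointPMF_marginal_poisson_general (K1 K2 : ℕ)
    (nu : Fin K1 → ℝ) (rho : Fin K2 → ℝ)
    (a : ℕ) (t : ℝ) :
    HasSum (fun n : ℕ => jointPMF K1 K2 nu rho a n t)
      (Real.exp (-(∑ j : Fin K1, nu j) * t) * ((∑ j : Fin K1, nu j) * t) ^ a /
        (Nat.factorial a)) := by
  set P : (Fin K1 → ℕ) → ℝ := fun r => ∏ j, (nu j * t) ^ r j / ((r j).factorial : ℝ)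
  set g : (Fin K1 → ℕ) → ℝ := fun r => if ∑ j, r j = a then P r else 0
  set h : (Fin K2 → ℕ) → ℝ := fun s => ∏ l, (rho l * t) ^ s l / ((s l).factorial : ℝ)
  set C := Real.exp (-((∑ j, nu j) + ∑ l, rho l) * t)
  have hg : HasSum g ((∑ j, nu j * t) ^ a / (a.factorial : ℝ)) := by
    rw [sum_pow_div_factorial_eq_sum_piAntidiag]
    exact hasSum_ite_sum_eq P a
  have hg_norm : Summable fun r => ‖g r‖ :=
    summable_of_ne_finset_zero (s := univ.piAntidiag a) fun r hr => norm_eq_zero.mpr <|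
      ite_sum_eq_eq_zero_of_notMem_piAntidiag P hr
  have hh : HasSum h (Real.exp (∑ l, rho l * t)) :=
    Real.hasSum_prod_pow_div_factorial fun l => rho l * t
  have hh_norm : Summable fun s => ‖h s‖ :=
    (summable_norm_prod_pi fun l => NormedSpace.norm_expSeries_div_summable (rho l * t) :)
  have hgh := (hg.mul hh (summable_mul_of_summable_norm hg_norm hh_norm)).mul_right C
  have hfib := hgh.sum_finset_fiberwise
      (fun p => (∑ j : Fin K1, (j.1 + 1) * p.1 j) + ∑ l : Fin K2, (l.1 + 1) * p.2 l)
      (jointTheta K1 K2 a) fun n p hp => by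
    have ha : ∑ j, p.1 j = a := by
      by_contra ha
      exact hp (by simp only [g, if_neg ha, zero_mul])
    exact mem_jointTheta.trans (and_iff_right ha)
  have hval : (∑ j, nu j * t) ^ a / (a.factorial : ℝ) * Real.exp (∑ l, rho l * t) * C =
      Real.exp (-(∑ j, nu j) * t) * ((∑ j, nu j) * t) ^ a / (a.factorial : ℝ) := by
    rw [← sum_mul, ← sum_mul, mul_assoc _ (Real.exp _), ← Real.exp_add]
    ring_nf
  rw [hval] at hfib
  refine hfib.congr_fun fun n => sum_congr rfl fun p hp => ?_
  simp only [g, P, h, C, if_pos (mem_jointTheta.mp hp).1]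

/-- The number of packets of jumps registered from a fixed merging component of a
merged GCP by time `t` is Poisson distributed with parameter `ν̄ t`, where
`ν̄ = Σ_j ν_j`: the marginal of `q(a, ·, t)` sums to `e^{−ν̄ t} (ν̄ t)^a / a!`. -/
theorem jointPMF_marginal_poisson (K1 K2 : ℕ) (hK1 : 1 ≤ K1) (hK2 : 1 ≤ K2)
    (nu : Fin K1 → ℝ) (rho : Fin K2 → ℝ)
    (hnu : ∀ j, 0 ≤ nu j) (hrho : ∀ l, 0 ≤ rho l) (a : ℕ) (t : ℝ) (ht : 0 ≤ t) :
    HasSum (fun n : ℕ => jointPMF K1 K2 nu rho a n t)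
      (Real.exp (-(∑ j : Fin K1, nu j) * t) * ((∑ j : Fin K1, nu j) * t) ^ a /
        (Nat.factorial a)) :=
  jointPMF_marginal_poisson_general K1 K2 nu rho a t
end
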